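/- arXiv:2203.06881 — 5 statements merged into one kernel-verified Lean document; each statement's English description precedes it below -/
import Mathlib

section
/- Let p be an odd prime and let u0, u1, u2, u3 be integers whose product is squarefree (each u_i squarefree). Suppose p divides u0, p does not divide u1*u2*u3, and -u2*u3 is a quadratic non-residue modulo p. Then the diagonal quadric u0*u2*x0^2 + u1*u3*x1^2 + u0*u3*x2^2 + u1*u2*x3^2 = 0 has no nontrivial solution over the p-adic numbers Q_p. -/
/-!
Scale a nontrivial solution to a primitive vector `y` over `ℤ_p` and write the form as
`u0 (u2 y0² + u3 y2²) + u1 (u3 y1² + u2 y3²)`. Both binary forms `u2 s² + u3 t²` are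
anisotropic mod `p` because `-u2 u3` is a non-residue. Reducing mod `p` kills the first
summand, so `p ∣ y1, y3`; then the second summand is divisible by `p²` while `p ∥ u0`
(squarefreeness), so dividing by `p` and reducing again gives `p ∣ y0, y2`.
-/

theorem mul_sq_add_mul_sq_eq_zero_iff {F : Type*} [Field F] {a b s t : F}
    (hab : ¬ IsSquare (-(a * b))) : a * s ^ 2 + b * t ^ 2 = 0 ↔ s = 0 ∧ t = 0 := by
  refine ⟨fun h ↦ ?_, by rintro ⟨rfl, rfl⟩; ring⟩
  have ha : a ≠ 0 := by
    rintro rfl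
    exact hab ⟨0, by ring⟩
  have ht : t = 0 := by
    by_contra ht
    exact hab ⟨a * s / t, by field_simp; linear_combination -h⟩
  subst ht
  simpa [ha] using h

namespace PadicInt

variable {p : ℕ} [Fact p.Prime]

theorem toZMod_eq_zero_iff_dvd (x : ℤ_[p]) : toZMod x = 0 ↔ (p : ℤ_[p]) ∣ x := by
  rw [← RingHom.mem_ker, ker_toZMod, maximalIdeal_eq_span_p, Ideal.mem_span_singleton]

theorem dvd_and_dvd_of_dvd_mul_mul_sq_add_mul_sq {c a b : ℤ} (hc : ¬ (p : ℤ) ∣ c)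
    (hab : ¬ IsSquare ((-(a * b) : ℤ) : ZMod p)) {s t : ℤ_[p]}
    (h : (p : ℤ_[p]) ∣ c * (a * s ^ 2 + b * t ^ 2)) : (p : ℤ_[p]) ∣ s ∧ (p : ℤ_[p]) ∣ t := by
  rw [← toZMod_eq_zero_iff_dvd] at h
  rw [← toZMod_eq_zero_iff_dvd, ← toZMod_eq_zero_iff_dvd,
    ← mul_sq_add_mul_sq_eq_zero_iff (a := (a : ZMod p)) (b := b) (by exact_mod_cast hab)]
  simp only [map_mul, map_add, map_pow, map_intCast] at h
  exact (mul_eq_zero.1 h).resolve_left (by rwa [ZMod.intCast_zmod_eq_zero_iff_dvd])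

theorem exists_rescale_not_dvd {ι : Type*} [Finite ι] {x : ι → ℚ_[p]} (hx : x ≠ 0) :
    ∃ c : ℚ_[p], ∃ y : ι → ℤ_[p], (∀ j, (y j : ℚ_[p]) = c * x j) ∧ ∃ i, ¬ (p : ℤ_[p]) ∣ y i := by
  obtain ⟨j₀, -⟩ := Function.ne_iff.1 hx
  obtain ⟨i, hi⟩ : ∃ i, ∀ j, ‖x j‖ ≤ ‖x i‖ := have := Nonempty.intro j₀; Finite.exists_max _
  have hxi : x i ≠ 0 := fun h ↦ hx (funext fun j ↦ norm_le_zero_iff.1 (by simpa [h] using hi j))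
  have hy : ∀ j, ‖(x i)⁻¹ * x j‖ ≤ 1 := fun j ↦ by
    rw [norm_mul, norm_inv, inv_mul_le_one₀ (norm_pos_iff.2 hxi)]
    exact hi j
  let y : ι → ℤ_[p] := fun j ↦ ⟨_, hy j⟩
  refine ⟨(x i)⁻¹, y, fun j ↦ rfl, i, ?_⟩
  rw [← norm_lt_one_iff_dvd, norm_def, not_lt]
  change 1 ≤ ‖(x i)⁻¹ * x i‖
  rw [inv_mul_cancel₀ hxi, norm_one]

theorem dvd_of_quadric_eq_zero {u0 u1 u2 u3 : ℤ} (h0 : Squarefree u0) (hdvd : (p : ℤ) ∣ u0)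
    (hu1 : ¬ (p : ℤ) ∣ u1) (hns : ¬ IsSquare ((-(u2 * u3) : ℤ) : ZMod p)) {y0 y1 y2 y3 : ℤ_[p]}
    (h : ((u0 * u2 : ℤ) : ℤ_[p]) * y0 ^ 2 + ((u1 * u3 : ℤ) : ℤ_[p]) * y1 ^ 2 +
      ((u0 * u3 : ℤ) : ℤ_[p]) * y2 ^ 2 + ((u1 * u2 : ℤ) : ℤ_[p]) * y3 ^ 2 = 0) :
    (p : ℤ_[p]) ∣ y0 ∧ (p : ℤ_[p]) ∣ y1 ∧ (p : ℤ_[p]) ∣ y2 ∧ (p : ℤ_[p]) ∣ y3 := by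
  obtain ⟨w, rfl⟩ := hdvd
  have hw : ¬ (p : ℤ) ∣ w := fun ⟨v, hv⟩ ↦
    (Nat.prime_iff_prime_int.1 Fact.out).not_isUnit (h0 p ⟨v, by rw [hv]; ring⟩)
  obtain ⟨⟨a, rfl⟩, ⟨b, rfl⟩⟩ : (p : ℤ_[p]) ∣ y3 ∧ (p : ℤ_[p]) ∣ y1 :=
    dvd_and_dvd_of_dvd_mul_mul_sq_add_mul_sq hu1 hns
      ⟨-(w * (u2 * y0 ^ 2 + u3 * y2 ^ 2)), by push_cast at h ⊢; linear_combination h⟩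
  have hp : (p : ℤ_[p]) ≠ 0 := prime_p.ne_zero
  obtain ⟨hy0, hy2⟩ : (p : ℤ_[p]) ∣ y0 ∧ (p : ℤ_[p]) ∣ y2 :=
    dvd_and_dvd_of_dvd_mul_mul_sq_add_mul_sq hw hns
      ⟨-(u1 * (u3 * b ^ 2 + u2 * a ^ 2)),
        mul_left_cancel₀ hp (by push_cast at h ⊢; linear_combination h)⟩
  exact ⟨hy0, dvd_mul_right _ _, hy2, dvd_mul_right _ _⟩

end PadicInt

theorem stmt_0_general (p : ℕ) [Fact p.Prime]
    (u0 u1 u2 u3 : ℤ)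
    (h0 : Squarefree u0)
    (hdvd : (p : ℤ) ∣ u0) (hndvd : ¬ (p : ℤ) ∣ u1 * u2 * u3)
    (hns : ¬ IsSquare ((-(u2 * u3) : ℤ) : ZMod p)) :
    ¬ ∃ x : Fin 4 → ℚ_[p], x ≠ 0 ∧
      ((u0 * u2 : ℤ) : ℚ_[p]) * (x 0) ^ 2 + ((u1 * u3 : ℤ) : ℚ_[p]) * (x 1) ^ 2 +
        ((u0 * u3 : ℤ) : ℚ_[p]) * (x 2) ^ 2 + ((u1 * u2 : ℤ) : ℚ_[p]) * (x 3) ^ 2 = 0 := by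
  rintro ⟨x, hx, hQ⟩
  obtain ⟨c, y, hy, i, hi⟩ := PadicInt.exists_rescale_not_dvd hx
  have hQy : ((u0 * u2 : ℤ) : ℤ_[p]) * (y 0) ^ 2 + ((u1 * u3 : ℤ) : ℤ_[p]) * (y 1) ^ 2 +
      ((u0 * u3 : ℤ) : ℤ_[p]) * (y 2) ^ 2 + ((u1 * u2 : ℤ) : ℤ_[p]) * (y 3) ^ 2 = 0 := by
    apply PadicInt.ext
    push_cast [hy] at hQ ⊢
    linear_combination c ^ 2 * hQ
  have hu1 : ¬ (p : ℤ) ∣ u1 := fun h ↦ hndvd ((h.mul_right u2).mul_right u3)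
  obtain ⟨_, _, _, _⟩ := PadicInt.dvd_of_quadric_eq_zero h0 hdvd hu1 hns hQy
  fin_cases i <;> contradiction

/-- Lemma (local solubility obstruction): for an odd prime `p` and squarefree integers
`u0, u1, u2, u3` with `p ∣ u0`, `p ∤ u1*u2*u3` and `-u2*u3` a quadratic non-residue mod `p`,
the diagonal quadric `u0u2 x0² + u1u3 x1² + u0u3 x2² + u1u2 x3² = 0` has no nontrivial
`ℚ_p`-point. -/
theorem stmt_0 (p : ℕ) [Fact p.Prime] (hodd : p ≠ 2)
    (u0 u1 u2 u3 : ℤ)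
    (h0 : Squarefree u0) (h1 : Squarefree u1) (h2 : Squarefree u2) (h3 : Squarefree u3)
    (hdvd : (p : ℤ) ∣ u0) (hndvd : ¬ (p : ℤ) ∣ u1 * u2 * u3)
    (hns : ¬ IsSquare ((-(u2 * u3) : ℤ) : ZMod p)) :
    ¬ ∃ x : Fin 4 → ℚ_[p], x ≠ 0 ∧
      ((u0 * u2 : ℤ) : ℚ_[p]) * (x 0) ^ 2 + ((u1 * u3 : ℤ) : ℚ_[p]) * (x 1) ^ 2 +
        ((u0 * u3 : ℤ) : ℚ_[p]) * (x 2) ^ 2 + ((u1 * u2 : ℤ) : ℚ_[p]) * (x 3) ^ 2 = 0 :=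
  stmt_0_general p u0 u1 u2 u3 h0 hdvd hndvd hns
end

section
/- There exist constants c > 0 and L0 ≥ 2 such that for all real L ≥ L0, the sum over squarefree integers n ≤ L of μ(n)^2 * τ(n) * φ*(n)^3 / n is at least c * (log L)^2, where τ is the number-of-divisors function and φ*(n) = ∏_{p | n} (1 - 1/p). -/
/-!
Keep only the `n = a b` with `a, b ≤ √L` squarefree and coprime. Such an `n` has at most `τ(n)`
of these factorisations and `φ*` is multiplicative, so the sum is at least `∑ g(a) g(b)` over
coprime pairs, where `g(a) = φ*(a)³ / a`. As `∑_{p ∣ a} g(a) ≤ T / p` for `T = ∑_a g(a)`, the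
pairs sharing a prime contribute at most `∑_p T² / p² ≤ (11/12) T²`, which leaves `T² / 12`.
Finally `T ≫ log L`: the same divisibility estimate shows that `log φ*(a) ≥ -2 ∑_{p ∣ a} 1/p` has
`1/a`-weighted mean at least `-11/6`, so Jensen's inequality gives `T ≫ ∑ μ²(a) / a`, and
`∑_{a ≤ M} μ²(a) / a ≥ (1/2) log M` because every `m ≤ M` is `b² a` with `a` squarefree.
-/

open Finset Real

noncomputable def phiStar (n : ℕ) : ℝ := ∏ q ∈ n.primeFactors, (1 - 1 / (q : ℝ))

def sqfreeUpTo (M : ℕ) : Finset ℕ := {a ∈ Icc 1 M | Squarefree a}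

lemma one_sub_inv_prime_pos {p : ℕ} (hp : p.Prime) : 0 < 1 - 1 / (p : ℝ) := by
  have : (2 : ℝ) ≤ p := by exact_mod_cast hp.two_le
  rw [sub_pos, div_lt_one (by linarith)]
  linarith

lemma one_sub_inv_natCast_le_one (p : ℕ) : 1 - 1 / (p : ℝ) ≤ 1 :=
  sub_le_self _ (by positivity)

lemma phiStar_pos (n : ℕ) : 0 < phiStar n :=
  prod_pos fun _ hp => one_sub_inv_prime_pos (Nat.prime_of_mem_primeFactors hp)

lemma phiStar_le_of_dvd {m n : ℕ} (h : m ∣ n) (hn : n ≠ 0) : phiStar n ≤ phiStar m :=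
  prod_le_prod_of_subset_of_le_one (Nat.primeFactors_mono h hn)
    (fun _ hp => (one_sub_inv_prime_pos (Nat.prime_of_mem_primeFactors hp)).le)
    (fun p _ _ => one_sub_inv_natCast_le_one p)

lemma phiStar_mul {m n : ℕ} (hm : m ≠ 0) (hn : n ≠ 0) (h : m.Coprime n) :
    phiStar (m * n) = phiStar m * phiStar n := by
  rw [phiStar, Nat.primeFactors_mul hm hn, prod_union h.disjoint_primeFactors]
  rfl

lemma log_phiStar (n : ℕ) :
    log (phiStar n) = ∑ p ∈ n.primeFactors, log (1 - 1 / (p : ℝ)) :=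
  log_prod fun _ hp => (one_sub_inv_prime_pos (Nat.prime_of_mem_primeFactors hp)).ne'

lemma neg_two_div_le_log_one_sub_inv {x : ℝ} (hx : 2 ≤ x) : -2 / x ≤ log (1 - 1 / x) := by
  have hx1 : 0 < 1 - 1 / x := by
    rw [sub_pos, div_lt_one (by linarith)]
    linarith
  refine le_trans ?_ (one_sub_inv_le_log_of_pos hx1)
  have hinv : 1 - (1 - 1 / x)⁻¹ = -(1 / (x - 1)) := by
    have : x - 1 ≠ 0 := by linarith
    field_simp
    ring
  rw [hinv, neg_div, neg_le_neg_iff, div_le_div_iff₀ (by linarith) (by linarith)]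
  linarith

lemma sum_inv_sq_le_of_prime (P : Finset ℕ) (hP : ∀ p ∈ P, p.Prime) :
    ∑ p ∈ P, ((p : ℝ) ^ 2)⁻¹ ≤ 11 / 12 := by
  have hsub : P ⊆ insert 2 (Ioo 2 (P.sup id + 1)) := fun p hp => by
    have := (hP p hp).two_le
    have := le_sup (f := id) hp
    simp only [mem_insert, mem_Ioo, id] at this ⊢
    omega
  calc ∑ p ∈ P, ((p : ℝ) ^ 2)⁻¹ ≤ ∑ p ∈ insert 2 (Ioo 2 (P.sup id + 1)), ((p : ℝ) ^ 2)⁻¹ :=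
        sum_le_sum_of_subset_of_nonneg hsub fun _ _ _ => by positivity
    _ ≤ 11 / 12 := by
        rw [sum_insert (by simp)]
        have := sum_Ioo_inv_sq_le (α := ℝ) 2 (P.sup id + 1)
        norm_num at this ⊢
        linarith

lemma sum_filter_dvd_le_div {s : Finset ℕ} {p : ℕ} (hp : p ≠ 0) (hs : ∀ b, p * b ∈ s → b ∈ s)
    {f : ℕ → ℝ} (hf₀ : ∀ b ∈ s, 0 ≤ f b) (hf : ∀ b, p * b ∈ s → f (p * b) ≤ f b / p) :
    ∑ a ∈ s with p ∣ a, f a ≤ (∑ b ∈ s, f b) / p := by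
  have himage : {a ∈ s | p ∣ a} = {b ∈ s | p * b ∈ s}.image (p * ·) := by
    ext a
    simp only [mem_filter, mem_image]
    constructor
    · rintro ⟨ha, b, rfl⟩
      exact ⟨b, ⟨hs b ha, ha⟩, rfl⟩
    · rintro ⟨b, ⟨-, hb⟩, rfl⟩
      exact ⟨hb, dvd_mul_right p b⟩
  rw [himage, sum_image fun _ _ _ _ h => Nat.eq_of_mul_eq_mul_left (Nat.pos_of_ne_zero hp) h,
    sum_div]
  calc ∑ b ∈ s with p * b ∈ s, f (p * b) ≤ ∑ b ∈ s with p * b ∈ s, f b / p :=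
        sum_le_sum fun b hb => hf b (mem_filter.1 hb).2
    _ ≤ ∑ b ∈ s, f b / p :=
        sum_le_sum_of_subset_of_nonneg (filter_subset _ _) fun b hb _ =>
          div_nonneg (hf₀ b hb) p.cast_nonneg

lemma exp_mul_sum_le_sum_mul_exp {ι : Type*} (s : Finset ι) {u x : ι → ℝ} {K : ℝ}
    (hu : ∀ i ∈ s, 0 ≤ u i) (hx : K * ∑ i ∈ s, u i ≤ ∑ i ∈ s, u i * x i) :
    exp K * ∑ i ∈ s, u i ≤ ∑ i ∈ s, u i * exp (x i) := by
  rcases (sum_nonneg hu).eq_or_lt with h | h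
  · rw [← h, mul_zero]
    exact sum_nonneg fun i hi => mul_nonneg (hu i hi) (exp_pos _).le
  · have jensen := convexOn_exp.map_centerMass_le (p := x) hu h fun _ _ => Set.mem_univ _
    simp only [centerMass, smul_eq_mul, Function.comp_apply] at jensen
    have hK : K ≤ (∑ i ∈ s, u i)⁻¹ * ∑ i ∈ s, u i * x i := by
      rw [inv_mul_eq_div, le_div_iff₀ h]
      exact hx
    calc exp K * ∑ i ∈ s, u i ≤ exp ((∑ i ∈ s, u i)⁻¹ * ∑ i ∈ s, u i * x i) * ∑ i ∈ s, u i := by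
          gcongr
      _ ≤ (∑ i ∈ s, u i)⁻¹ * (∑ i ∈ s, u i * exp (x i)) * ∑ i ∈ s, u i := by gcongr
      _ = ∑ i ∈ s, u i * exp (x i) := by field_simp

lemma sum_not_coprime_le_sum_sq {s P : Finset ℕ} (hs₀ : 0 ∉ s) (hsP : ∀ a ∈ s, a.primeFactors ⊆ P)
    {f : ℕ → ℝ} (hf : ∀ a ∈ s, 0 ≤ f a) :
    ∑ x ∈ s ×ˢ s with ¬ x.1.Coprime x.2, f x.1 * f x.2 ≤
      ∑ p ∈ P, (∑ a ∈ s with p ∣ a, f a) ^ 2 := by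
  set S := {x ∈ s ×ˢ s | ¬ x.1.Coprime x.2}
  -- A pair sharing a prime factor is charged to the least one.
  have hmaps : ∀ x ∈ S, (x.1.gcd x.2).minFac ∈ P := by
    intro x hx
    obtain ⟨hxs, hnc⟩ := mem_filter.1 hx
    have hx1 : x.1 ≠ 0 := ne_of_mem_of_not_mem (mem_product.1 hxs).1 hs₀
    exact hsP x.1 (mem_product.1 hxs).1 (Nat.mem_primeFactors.2
      ⟨Nat.minFac_prime hnc, (Nat.minFac_dvd _).trans (Nat.gcd_dvd_left _ _), hx1⟩)
  rw [← sum_fiberwise_of_maps_to hmaps]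
  refine sum_le_sum fun p _ => ?_
  rw [sq, sum_mul_sum, ← sum_product']
  refine sum_le_sum_of_subset_of_nonneg (fun x hx => ?_) fun x hx _ => ?_
  · obtain ⟨hxS, rfl⟩ := mem_filter.1 hx
    obtain ⟨hxs, -⟩ := mem_filter.1 hxS
    have hd := Nat.minFac_dvd (x.1.gcd x.2)
    exact mem_product.2 ⟨mem_filter.2 ⟨(mem_product.1 hxs).1, hd.trans (Nat.gcd_dvd_left _ _)⟩,
      mem_filter.2 ⟨(mem_product.1 hxs).2, hd.trans (Nat.gcd_dvd_right _ _)⟩⟩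
  · obtain ⟨h1, h2⟩ := mem_product.1 hx
    exact mul_nonneg (hf _ (mem_filter.1 h1).1) (hf _ (mem_filter.1 h2).1)

section SqfreeUpTo

variable {M : ℕ}

lemma mem_sqfreeUpTo {a : ℕ} : a ∈ sqfreeUpTo M ↔ a ≤ M ∧ Squarefree a := by
  simp only [sqfreeUpTo, mem_filter, mem_Icc]
  exact ⟨fun ⟨⟨_, h⟩, hs⟩ => ⟨h, hs⟩,
    fun ⟨h, hs⟩ => ⟨⟨Nat.one_le_iff_ne_zero.2 hs.ne_zero, h⟩, hs⟩⟩

lemma ne_zero_of_mem_sqfreeUpTo {a : ℕ} (ha : a ∈ sqfreeUpTo M) : a ≠ 0 :=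
  (mem_sqfreeUpTo.1 ha).2.ne_zero

lemma mem_sqfreeUpTo_of_dvd {a b : ℕ} (h : b ∣ a) (ha : a ∈ sqfreeUpTo M) : b ∈ sqfreeUpTo M := by
  obtain ⟨haM, hsf⟩ := mem_sqfreeUpTo.1 ha
  exact mem_sqfreeUpTo.2 ⟨(Nat.le_of_dvd (Nat.pos_of_ne_zero hsf.ne_zero) h).trans haM,
    hsf.squarefree_of_dvd h⟩

lemma primeFactors_eq_filter_primesBelow {a : ℕ} (ha : a ∈ sqfreeUpTo M) :
    a.primeFactors = {p ∈ (M + 1).primesBelow | p ∣ a} := by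
  obtain ⟨haM, hsf⟩ := mem_sqfreeUpTo.1 ha
  ext p
  simp only [Nat.mem_primeFactors, mem_filter, Nat.mem_primesBelow]
  constructor
  · rintro ⟨hp, hpa, ha0⟩
    exact ⟨⟨by have := Nat.le_of_dvd (Nat.pos_of_ne_zero ha0) hpa; omega, hp⟩, hpa⟩
  · rintro ⟨⟨-, hp⟩, hpa⟩
    exact ⟨hp, hpa, hsf.ne_zero⟩

lemma sum_inv_filter_dvd_le {p : ℕ} (hp : p ≠ 0) :
    ∑ a ∈ sqfreeUpTo M with p ∣ a, (a : ℝ)⁻¹ ≤ (∑ a ∈ sqfreeUpTo M, (a : ℝ)⁻¹) / p :=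
  sum_filter_dvd_le_div hp (fun b => mem_sqfreeUpTo_of_dvd (dvd_mul_left b p))
    (fun _ _ => by positivity) fun b _ => by rw [Nat.cast_mul, mul_inv, div_eq_mul_inv, mul_comm]

lemma sum_phiStar_filter_dvd_le {p : ℕ} (hp : p ≠ 0) :
    ∑ a ∈ sqfreeUpTo M with p ∣ a, phiStar a ^ 3 / a ≤
      (∑ a ∈ sqfreeUpTo M, phiStar a ^ 3 / a) / p := by
  refine sum_filter_dvd_le_div hp (fun b => mem_sqfreeUpTo_of_dvd (dvd_mul_left b p))
    (fun a _ => div_nonneg (pow_nonneg (phiStar_pos a).le 3) a.cast_nonneg) fun b hb => ?_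
  rw [div_div, mul_comm (b : ℝ), ← Nat.cast_mul]
  have := phiStar_le_of_dvd (dvd_mul_left b p) (ne_zero_of_mem_sqfreeUpTo hb)
  gcongr
  exact (phiStar_pos _).le

end SqfreeUpTo

lemma sum_Icc_inv_le_two_mul_sum_sqfreeUpTo (M : ℕ) :
    ∑ m ∈ Icc 1 M, (m : ℝ)⁻¹ ≤ 2 * ∑ a ∈ sqfreeUpTo M, (a : ℝ)⁻¹ := by
  have hcover : Icc 1 M ⊆ (Icc 1 M ×ˢ sqfreeUpTo M).image fun x : ℕ × ℕ => x.1 ^ 2 * x.2 := by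
    intro m hm
    obtain ⟨a, b, rfl, ha⟩ := Nat.sq_mul_squarefree m
    obtain ⟨hm1, hmM⟩ := mem_Icc.1 hm
    have hb : 1 ≤ b := Nat.one_le_iff_ne_zero.2 fun h => by simp [h] at hm1
    have hle {d : ℕ} (hd : d ∣ b ^ 2 * a) : d ≤ M := (Nat.le_of_dvd hm1 hd).trans hmM
    exact mem_image.2 ⟨(b, a), mem_product.2 ⟨mem_Icc.2 ⟨hb, hle (Dvd.dvd.mul_right
      (dvd_pow_self b two_ne_zero) a)⟩, mem_sqfreeUpTo.2 ⟨hle (dvd_mul_left a _), ha⟩⟩, rfl⟩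
  have hIoo : Ioo 0 (M + 1) = Icc 1 M := by
    ext
    simp only [mem_Ioo, mem_Icc]
    omega
  calc ∑ m ∈ Icc 1 M, (m : ℝ)⁻¹
      ≤ ∑ m ∈ (Icc 1 M ×ˢ sqfreeUpTo M).image (fun x : ℕ × ℕ => x.1 ^ 2 * x.2), (m : ℝ)⁻¹ :=
        sum_le_sum_of_subset_of_nonneg hcover fun _ _ _ => by positivity
    _ ≤ ∑ x ∈ Icc 1 M ×ˢ sqfreeUpTo M, ((x.1 ^ 2 * x.2 : ℕ) : ℝ)⁻¹ :=
        sum_image_le_of_nonneg fun _ _ => by positivity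
    _ = (∑ b ∈ Icc 1 M, ((b : ℝ) ^ 2)⁻¹) * ∑ a ∈ sqfreeUpTo M, (a : ℝ)⁻¹ := by
        rw [sum_product, sum_mul_sum]
        push_cast
        simp_rw [mul_inv]
    _ ≤ 2 * ∑ a ∈ sqfreeUpTo M, (a : ℝ)⁻¹ := by
        gcongr
        have := sum_Ioo_inv_sq_le (α := ℝ) 0 (M + 1)
        rw [hIoo] at this
        norm_num at this
        exact this

lemma log_le_two_mul_sum_sqfreeUpTo_floor {y : ℝ} (hy : 0 ≤ y) :
    log y ≤ 2 * ∑ a ∈ sqfreeUpTo ⌊y⌋₊, (a : ℝ)⁻¹ := by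
  have := log_le_harmonic_floor y hy
  rw [harmonic_eq_sum_Icc] at this
  push_cast at this
  exact this.trans (sum_Icc_inv_le_two_mul_sum_sqfreeUpTo _)

lemma neg_mul_sum_inv_le_sum_inv_mul_log_phiStar (M : ℕ) :
    -(11 / 6) * ∑ a ∈ sqfreeUpTo M, (a : ℝ)⁻¹ ≤
      ∑ a ∈ sqfreeUpTo M, (a : ℝ)⁻¹ * log (phiStar a) := by
  set T₀ := ∑ a ∈ sqfreeUpTo M, (a : ℝ)⁻¹
  set P := (M + 1).primesBelow
  have hP : ∀ p ∈ P, p.Prime := fun p hp => (Nat.mem_primesBelow.1 hp).2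
  have hT₀ : 0 ≤ T₀ := sum_nonneg fun _ _ => by positivity
  calc -(11 / 6) * T₀ ≤ -2 * (∑ p ∈ P, ((p : ℝ) ^ 2)⁻¹) * T₀ := by
        have := sum_inv_sq_le_of_prime P hP
        gcongr
        linarith
    _ = ∑ p ∈ P, -2 / (p : ℝ) * (T₀ / p) := by
        rw [mul_comm (-2 : ℝ), sum_mul, sum_mul]
        exact sum_congr rfl fun p _ => by ring
    _ ≤ ∑ p ∈ P, log (1 - 1 / (p : ℝ)) * ∑ a ∈ sqfreeUpTo M with p ∣ a, (a : ℝ)⁻¹ := by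
        refine sum_le_sum fun p hp => ?_
        have hp2 : (2 : ℝ) ≤ p := by exact_mod_cast (hP p hp).two_le
        have hlog : log (1 - 1 / (p : ℝ)) ≤ 0 :=
          log_nonpos (one_sub_inv_prime_pos (hP p hp)).le (one_sub_inv_natCast_le_one p)
        calc -2 / (p : ℝ) * (T₀ / p) ≤ log (1 - 1 / (p : ℝ)) * (T₀ / p) := by
              gcongr
              exact neg_two_div_le_log_one_sub_inv hp2
          _ ≤ _ := mul_le_mul_of_nonpos_left (sum_inv_filter_dvd_le (hP p hp).ne_zero) hlog
    _ = ∑ a ∈ sqfreeUpTo M, (a : ℝ)⁻¹ * log (phiStar a) := by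
        simp_rw [mul_sum, sum_filter]
        rw [sum_comm]
        refine sum_congr rfl fun a ha => ?_
        rw [log_phiStar, primeFactors_eq_filter_primesBelow ha, sum_filter, mul_sum]
        exact sum_congr rfl fun p _ => by split_ifs <;> ring

lemma exp_mul_sum_inv_le_sum_phiStar_pow_three (M : ℕ) :
    exp (-(11 / 2)) * ∑ a ∈ sqfreeUpTo M, (a : ℝ)⁻¹ ≤
      ∑ a ∈ sqfreeUpTo M, phiStar a ^ 3 / a := by
  have hx : -(11 / 2) * ∑ a ∈ sqfreeUpTo M, (a : ℝ)⁻¹ ≤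
      ∑ a ∈ sqfreeUpTo M, (a : ℝ)⁻¹ * log (phiStar a ^ 3) := by
    simp_rw [log_pow, mul_left_comm _ ((3 : ℕ) : ℝ), ← mul_sum]
    have := neg_mul_sum_inv_le_sum_inv_mul_log_phiStar M
    push_cast
    linarith
  refine (exp_mul_sum_le_sum_mul_exp _ (fun _ _ => by positivity) hx).trans_eq ?_
  exact sum_congr rfl fun a _ => by rw [exp_log (pow_pos (phiStar_pos a) 3), inv_mul_eq_div]

lemma sq_sum_phiStar_le_twelve_mul_sum_coprime (M : ℕ) :
    (∑ a ∈ sqfreeUpTo M, phiStar a ^ 3 / a) ^ 2 ≤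
      12 * ∑ x ∈ sqfreeUpTo M ×ˢ sqfreeUpTo M with x.1.Coprime x.2,
        phiStar x.1 ^ 3 / x.1 * (phiStar x.2 ^ 3 / x.2) := by
  set T := ∑ a ∈ sqfreeUpTo M, phiStar a ^ 3 / a
  set P := (M + 1).primesBelow
  have hP : ∀ p ∈ P, p.Prime := fun p hp => (Nat.mem_primesBelow.1 hp).2
  have hg : ∀ a ∈ sqfreeUpTo M, 0 ≤ phiStar a ^ 3 / a := fun a _ =>
    div_nonneg (pow_nonneg (phiStar_pos a).le 3) a.cast_nonneg
  have hsplit := sum_filter_add_sum_filter_not (sqfreeUpTo M ×ˢ sqfreeUpTo M)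
    (fun x => x.1.Coprime x.2) fun x => phiStar x.1 ^ 3 / x.1 * (phiStar x.2 ^ 3 / x.2)
  have htotal : ∑ x ∈ sqfreeUpTo M ×ˢ sqfreeUpTo M, phiStar x.1 ^ 3 / x.1 * (phiStar x.2 ^ 3 / x.2)
      = T ^ 2 := by
    rw [sq, sum_mul_sum, sum_product]
  have hnot := sum_not_coprime_le_sum_sq (P := P) (fun h => ne_zero_of_mem_sqfreeUpTo h rfl)
    (fun a ha => (primeFactors_eq_filter_primesBelow ha).trans_subset (filter_subset _ _)) hg
  have hprimes :
      ∑ p ∈ P, (∑ a ∈ sqfreeUpTo M with p ∣ a, phiStar a ^ 3 / a) ^ 2 ≤ 11 / 12 * T ^ 2 :=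
    calc ∑ p ∈ P, (∑ a ∈ sqfreeUpTo M with p ∣ a, phiStar a ^ 3 / a) ^ 2
        ≤ ∑ p ∈ P, (T / p) ^ 2 := sum_le_sum fun p hp => by
          gcongr
          · exact sum_nonneg fun a ha => hg a (mem_filter.1 ha).1
          · exact sum_phiStar_filter_dvd_le (hP p hp).ne_zero
      _ = (∑ p ∈ P, ((p : ℝ) ^ 2)⁻¹) * T ^ 2 := by
          rw [sum_mul]
          exact sum_congr rfl fun p _ => by ring
      _ ≤ 11 / 12 * T ^ 2 := by gcongr; exact sum_inv_sq_le_of_prime P hP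
  linarith

open ArithmeticFunction in
lemma sum_coprime_le_sum_moebius_sq_mul_card_divisors {M N : ℕ} (hMN : M * M ≤ N) :
    ∑ x ∈ sqfreeUpTo M ×ˢ sqfreeUpTo M with x.1.Coprime x.2,
        phiStar x.1 ^ 3 / x.1 * (phiStar x.2 ^ 3 / x.2) ≤
      ∑ n ∈ Icc 1 N, (moebius n : ℝ) ^ 2 * (n.divisors.card : ℝ) * phiStar n ^ 3 / n := by
  set S := {x ∈ sqfreeUpTo M ×ˢ sqfreeUpTo M | x.1.Coprime x.2}
  have hS : ∀ x ∈ S, Squarefree x.1 ∧ Squarefree x.2 ∧ x.1.Coprime x.2 ∧ x.1 ≤ M ∧ x.2 ≤ M := by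
    intro x hx
    obtain ⟨hxs, hcop⟩ := mem_filter.1 hx
    obtain ⟨⟨h1M, h1⟩, ⟨h2M, h2⟩⟩ := (mem_product.1 hxs).imp mem_sqfreeUpTo.1 mem_sqfreeUpTo.1
    exact ⟨h1, h2, hcop, h1M, h2M⟩
  have hmaps : ∀ x ∈ S, x.1 * x.2 ∈ Icc 1 N := by
    intro x hx
    obtain ⟨h1, h2, -, h1M, h2M⟩ := hS x hx
    exact mem_Icc.2 ⟨Nat.one_le_iff_ne_zero.2 (mul_ne_zero h1.ne_zero h2.ne_zero),
      (Nat.mul_le_mul h1M h2M).trans hMN⟩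
  have hterm : ∀ x ∈ S, phiStar x.1 ^ 3 / x.1 * (phiStar x.2 ^ 3 / x.2) =
      (moebius (x.1 * x.2) : ℝ) ^ 2 * phiStar (x.1 * x.2) ^ 3 / (x.1 * x.2 : ℕ) := by
    intro x hx
    obtain ⟨h1, h2, hcop, -⟩ := hS x hx
    have hμ : (moebius (x.1 * x.2) : ℝ) ^ 2 = 1 := by
      exact_mod_cast moebius_sq_eq_one_of_squarefree ((Nat.squarefree_mul hcop).2 ⟨h1, h2⟩)
    rw [hμ, phiStar_mul h1.ne_zero h2.ne_zero hcop]
    push_cast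
    ring
  rw [sum_congr rfl hterm, ← sum_fiberwise_of_maps_to hmaps]
  refine sum_le_sum fun n hn => ?_
  have hfiber : {x ∈ S | x.1 * x.2 = n} ⊆ n.divisorsAntidiagonal := fun x hx => by
    obtain ⟨-, hxn⟩ := mem_filter.1 hx
    exact Nat.mem_divisorsAntidiagonal.2 ⟨hxn, by have := (mem_Icc.1 hn).1; omega⟩
  have hcard : #{x ∈ S | x.1 * x.2 = n} ≤ #n.divisors := by
    rw [← card_map ⟨fun d => (d, n / d), fun _ _ h => (Prod.ext_iff.1 h).1⟩,
      Nat.map_div_right_divisors]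
    exact card_le_card hfiber
  rw [sum_congr rfl fun x hx => by rw [(mem_filter.1 hx).2], sum_const, nsmul_eq_mul]
  calc (#{x ∈ S | x.1 * x.2 = n} : ℝ) * ((moebius n : ℝ) ^ 2 * phiStar n ^ 3 / n)
      ≤ #n.divisors * ((moebius n : ℝ) ^ 2 * phiStar n ^ 3 / n) := by
        gcongr
        exact div_nonneg (mul_nonneg (sq_nonneg _) (pow_nonneg (phiStar_pos n).le 3)) n.cast_nonneg
    _ = _ := by ring

open ArithmeticFunction in
/-- `∑_{n ≤ L} μ²(n) τ(n) φ*(n)³ / n ≫ (log L)²`. -/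
theorem stmt_5 : ∃ c : ℝ, 0 < c ∧ ∃ L0 : ℝ, 2 ≤ L0 ∧ ∀ L : ℝ, L0 ≤ L →
    c * (Real.log L) ^ 2 ≤
      ∑ n ∈ Finset.Icc 1 ⌊L⌋₊,
        ((moebius n : ℝ)) ^ 2 * (n.divisors.card : ℝ) *
          (∏ q ∈ n.primeFactors, (1 - 1 / (q : ℝ))) ^ 3 / (n : ℝ) := by
  refine ⟨(exp (-(11 / 2)) / 4) ^ 2 / 12, by positivity, 2, le_rfl, fun L hL => ?_⟩
  set M := ⌊√L⌋₊
  have hMN : M * M ≤ ⌊L⌋₊ := by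
    refine Nat.le_floor ?_
    have hM : (M : ℝ) ≤ √L := Nat.floor_le (sqrt_nonneg L)
    push_cast
    nlinarith [sq_sqrt (show 0 ≤ L by linarith), sqrt_nonneg L]
  have hlog : 0 ≤ log L := log_nonneg (by linarith)
  have hsum : log L / 4 ≤ ∑ a ∈ sqfreeUpTo M, (a : ℝ)⁻¹ := by
    have := log_le_two_mul_sum_sqfreeUpTo_floor (sqrt_nonneg L)
    rw [log_sqrt (by linarith)] at this
    linarith
  have hT := (mul_le_mul_of_nonneg_left hsum (exp_pos _).le).trans
    (exp_mul_sum_inv_le_sum_phiStar_pow_three M)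
  calc (exp (-(11 / 2)) / 4) ^ 2 / 12 * log L ^ 2 = (exp (-(11 / 2)) * (log L / 4)) ^ 2 / 12 := by
        ring
    _ ≤ (∑ a ∈ sqfreeUpTo M, phiStar a ^ 3 / a) ^ 2 / 12 := by gcongr
    _ ≤ ∑ x ∈ sqfreeUpTo M ×ˢ sqfreeUpTo M with x.1.Coprime x.2,
          phiStar x.1 ^ 3 / x.1 * (phiStar x.2 ^ 3 / x.2) := by
        linarith [sq_sum_phiStar_le_twelve_mul_sum_coprime M]
    _ ≤ _ := sum_coprime_le_sum_moebius_sq_mul_card_divisors hMN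
end

section
/- For every real T ≥ 1, one has ∑_{m ≤ √T} 1 / (m^2 * (1 + log(T/m^2))^2) ≪ 1 / (1 + log T)^2, i.e., there is an absolute constant C such that the sum is at most C / (1 + log T)^2. -/
/-!
Write `log T = log (T / m²) + 2 log m`. Since `log m ≤ m ^ ε / ε`, the factor `1 + log T` exceeds
`1 + log (T / m²)` by at most a factor `O_ε(m ^ ε)` whenever `1 ≤ m ≤ √T`. Hence the `m`-th term is
`O_ε(m ^ (2ε - 2) / (1 + log T)²)`, and for `ε = 1/4` the series `∑ m ^ (-3/2)` converges.
-/

open Real Finset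

lemma one_add_log_le_mul_rpow_mul_one_add_log_div {ε T m : ℝ} (hε : 0 < ε) (hm : 1 ≤ m)
    (hmT : m ^ 2 ≤ T) :
    1 + log T ≤ (1 + 2 / ε) * m ^ ε * (1 + log (T / m ^ 2)) := by
  have hm0 : 0 < m := by linarith
  have hT0 : 0 < T := by nlinarith
  have hy : 0 ≤ log (T / m ^ 2) := log_nonneg ((one_le_div (by positivity)).2 hmT)
  have hlogT : log T = log (T / m ^ 2) + 2 * log m := by
    rw [log_div hT0.ne' (by positivity), log_pow]
    push_cast
    ring
  have hlogm : 2 * log m ≤ 2 / ε * m ^ ε :=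
    calc 2 * log m ≤ 2 * (m ^ ε / ε) := by gcongr; exact log_le_rpow_div hm0.le hε
      _ = 2 / ε * m ^ ε := by ring
  have hmε : 1 ≤ m ^ ε := one_le_rpow hm hε.le
  calc 1 + log T = 1 + log (T / m ^ 2) + 2 * log m := by rw [hlogT]; ring
    _ ≤ m ^ ε * (1 + log (T / m ^ 2)) + 2 / ε * m ^ ε * (1 + log (T / m ^ 2)) :=
        add_le_add (le_mul_of_one_le_left (by linarith) hmε)
          (hlogm.trans (le_mul_of_one_le_right (by positivity) (by linarith)))
    _ = (1 + 2 / ε) * m ^ ε * (1 + log (T / m ^ 2)) := by ring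

lemma one_div_sq_mul_one_add_log_div_sq_le {ε T m : ℝ} (hε : 0 < ε) (hm : 1 ≤ m)
    (hmT : m ^ 2 ≤ T) :
    1 / (m ^ 2 * (1 + log (T / m ^ 2)) ^ 2) ≤
      (1 + 2 / ε) ^ 2 / (1 + log T) ^ 2 * (1 / m ^ (2 - 2 * ε)) := by
  have hm0 : 0 < m := by linarith
  have hT : 0 ≤ log T := log_nonneg (by nlinarith)
  have hy : 0 ≤ log (T / m ^ 2) := log_nonneg ((one_le_div (by positivity)).2 hmT)
  have hsplit : m ^ 2 = m ^ (2 - 2 * ε) * (m ^ ε) ^ 2 := by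
    rw [← rpow_mul_natCast hm0.le, ← rpow_add hm0, ← rpow_natCast]
    congr 1
    push_cast
    ring
  have hsq : (1 + log T) ^ 2 ≤ ((1 + 2 / ε) * m ^ ε * (1 + log (T / m ^ 2))) ^ 2 :=
    pow_le_pow_left₀ (by linarith) (one_add_log_le_mul_rpow_mul_one_add_log_div hε hm hmT) 2
  set y := log (T / m ^ 2)
  rw [div_mul_div_comm, mul_one, div_le_div_iff₀ (by positivity) (by positivity), one_mul, hsplit]
  calc (1 + log T) ^ 2 * m ^ (2 - 2 * ε)
      ≤ ((1 + 2 / ε) * m ^ ε * (1 + y)) ^ 2 * m ^ (2 - 2 * ε) := by gcongr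
    _ = (1 + 2 / ε) ^ 2 * (m ^ (2 - 2 * ε) * (m ^ ε) ^ 2 * (1 + y) ^ 2) := by ring

lemma one_le_and_sq_le_of_mem_Icc_floor_sqrt {T : ℝ} {m : ℕ} (hm : m ∈ Icc 1 ⌊√T⌋₊) :
    1 ≤ (m : ℝ) ∧ (m : ℝ) ^ 2 ≤ T := by
  obtain ⟨h1, hsqrt⟩ := mem_Icc.1 hm
  have hpos : 0 < (m : ℝ) := by exact_mod_cast h1
  exact ⟨by exact_mod_cast h1,
    (le_sqrt' hpos).1 ((Nat.le_floor_iff (sqrt_nonneg T)).1 hsqrt)⟩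

/-- `∑_{m ≤ √T} 1/(m²(1 + log(T/m²))²) ≪ 1/(1 + log T)²`. -/
theorem stmt_7 : ∃ C : ℝ, ∀ T : ℝ, 1 ≤ T →
    ∑ m ∈ Finset.Icc 1 ⌊Real.sqrt T⌋₊,
        1 / ((m : ℝ) ^ 2 * (1 + Real.log (T / (m : ℝ) ^ 2)) ^ 2) ≤
      C / (1 + Real.log T) ^ 2 := by
  set ε : ℝ := 1 / 4
  have hsum : Summable fun n : ℕ => 1 / (n : ℝ) ^ (2 - 2 * ε) :=
    summable_one_div_nat_rpow.2 (by norm_num [ε])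
  set S := ∑' n : ℕ, 1 / (n : ℝ) ^ (2 - 2 * ε)
  refine ⟨(1 + 2 / ε) ^ 2 * S, fun T _ => ?_⟩
  calc ∑ m ∈ Icc 1 ⌊√T⌋₊, 1 / ((m : ℝ) ^ 2 * (1 + log (T / (m : ℝ) ^ 2)) ^ 2)
      ≤ ∑ m ∈ Icc 1 ⌊√T⌋₊, (1 + 2 / ε) ^ 2 / (1 + log T) ^ 2 * (1 / (m : ℝ) ^ (2 - 2 * ε)) :=
        sum_le_sum fun m hm =>
          have ⟨h1, hmT⟩ := one_le_and_sq_le_of_mem_Icc_floor_sqrt hm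
          one_div_sq_mul_one_add_log_div_sq_le (by norm_num [ε]) h1 hmT
    _ = (1 + 2 / ε) ^ 2 / (1 + log T) ^ 2 * ∑ m ∈ Icc 1 ⌊√T⌋₊, 1 / (m : ℝ) ^ (2 - 2 * ε) := by
        rw [mul_sum]
    _ ≤ (1 + 2 / ε) ^ 2 / (1 + log T) ^ 2 * S := by
        gcongr
        exact hsum.sum_le_tsum _ fun n _ => by positivity
    _ = (1 + 2 / ε) ^ 2 * S / (1 + log T) ^ 2 := by ring
end

section
/- There exists a constant c > 0 such that for all B ≥ 1, the number of points (y0:y1:y2:y3) ∈ P^3(Q), represented by primitive integer vectors with max|y_i| ≤ √B, satisfying y0*y1 = y2*y3 and such that the quadric y0 x0^2 + y1 x1^2 + y2 x2^2 + y3 x3^2 = 0 has a point over every completion of Q, is at least c*B. -/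
/-!
The points `(u, v, -u, -v)` with `u, v` coprime lie on `y₀y₁ = y₂y₃`, and their fibre quadric
`u(x₀² - x₂²) + v(x₁² - x₃²) = 0` has the point `(1 : 1 : 1 : 1)` over every field, so each such
point is counted. A pair in `[1, N]²` that is not coprime has both entries divisible by some
`d ∈ [2, N]`, and `∑_{d ≥ 2} d⁻² ≤ 11/12`; hence at least `N²/12` pairs in `[1, N]²` are coprime,
and `N = ⌊√B⌋` gives the bound `B/48`.
-/

open Finset

lemma card_filter_dvd_dvd_Icc (N d : ℕ) :
    #{p ∈ Icc 1 N ×ˢ Icc 1 N | d ∣ p.1 ∧ d ∣ p.2} = (N / d) ^ 2 := by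
  rw [filter_product (fun a => d ∣ a) (fun b => d ∣ b), card_product,
    show Icc 1 N = Ioc 0 N from rfl, Nat.Ioc_filter_dvd_card_eq_div, sq]

lemma card_not_coprime_Icc_le (N : ℕ) :
    #{p ∈ Icc 1 N ×ˢ Icc 1 N | ¬ p.1.Coprime p.2} ≤ ∑ d ∈ Icc 2 N, (N / d) ^ 2 := by
  calc #{p ∈ Icc 1 N ×ˢ Icc 1 N | ¬ p.1.Coprime p.2}
      ≤ #((Icc 2 N).biUnion fun d => {p ∈ Icc 1 N ×ˢ Icc 1 N | d ∣ p.1 ∧ d ∣ p.2}) := by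
        refine card_le_card fun p hp => ?_
        simp only [mem_filter, mem_product, mem_Icc, Nat.Coprime] at hp
        obtain ⟨⟨⟨ha1, haN⟩, hb1, hbN⟩, hgcd⟩ := hp
        have hpos : 0 < p.1.gcd p.2 := Nat.gcd_pos_of_pos_left _ ha1
        simp only [mem_biUnion, mem_filter, mem_product, mem_Icc]
        exact ⟨p.1.gcd p.2, ⟨by omega, (Nat.gcd_le_left _ ha1).trans haN⟩,
          ⟨⟨ha1, haN⟩, hb1, hbN⟩, Nat.gcd_dvd_left _ _, Nat.gcd_dvd_right _ _⟩
    _ ≤ ∑ d ∈ Icc 2 N, #{p ∈ Icc 1 N ×ˢ Icc 1 N | d ∣ p.1 ∧ d ∣ p.2} := card_biUnion_le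
    _ = ∑ d ∈ Icc 2 N, (N / d) ^ 2 := sum_congr rfl fun d _ => card_filter_dvd_dvd_Icc N d

lemma sum_Icc_two_inv_sq_le (N : ℕ) : ∑ d ∈ Icc 2 N, ((d : ℝ) ^ 2)⁻¹ ≤ 11 / 12 := by
  have hsub : Icc 2 N ⊆ insert 2 (Ioo 2 (N + 1)) := by
    intro d hd
    simp only [mem_Icc, mem_insert, mem_Ioo] at hd ⊢
    omega
  calc ∑ d ∈ Icc 2 N, ((d : ℝ) ^ 2)⁻¹
      ≤ ∑ d ∈ insert 2 (Ioo 2 (N + 1)), ((d : ℝ) ^ 2)⁻¹ :=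
        sum_le_sum_of_subset_of_nonneg hsub fun _ _ _ => by positivity
    _ = 1 / 4 + ∑ d ∈ Ioo 2 (N + 1), ((d : ℝ) ^ 2)⁻¹ := by
        rw [sum_insert (by simp)]; norm_num
    _ ≤ 1 / 4 + 2 / (2 + 1) := by gcongr; exact_mod_cast sum_Ioo_inv_sq_le 2 (N + 1)
    _ = 11 / 12 := by norm_num

lemma card_coprime_Icc_ge (N : ℕ) :
    (N : ℝ) ^ 2 / 12 ≤ #{p ∈ Icc 1 N ×ˢ Icc 1 N | p.1.Coprime p.2} := by
  have hsplit := card_filter_add_card_filter_not (s := Icc 1 N ×ˢ Icc 1 N)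
    fun p : ℕ × ℕ => p.1.Coprime p.2
  rw [card_product, Nat.card_Icc, Nat.add_sub_cancel] at hsplit
  have hbad : (#{p ∈ Icc 1 N ×ˢ Icc 1 N | ¬ p.1.Coprime p.2} : ℝ) ≤ 11 / 12 * (N : ℝ) ^ 2 :=
    calc (#{p ∈ Icc 1 N ×ˢ Icc 1 N | ¬ p.1.Coprime p.2} : ℝ)
        ≤ ∑ d ∈ Icc 2 N, (((N / d : ℕ) : ℝ)) ^ 2 := by
          exact_mod_cast card_not_coprime_Icc_le N
      _ ≤ ∑ d ∈ Icc 2 N, (N : ℝ) ^ 2 * ((d : ℝ) ^ 2)⁻¹ := by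
          gcongr with d
          rw [← div_eq_mul_inv, ← div_pow]
          gcongr
          exact Nat.cast_div_le
      _ = (N : ℝ) ^ 2 * ∑ d ∈ Icc 2 N, ((d : ℝ) ^ 2)⁻¹ := (mul_sum ..).symm
      _ ≤ 11 / 12 * (N : ℝ) ^ 2 := by
          rw [mul_comm]; gcongr; exact sum_Icc_two_inv_sq_le N
  have hsplit' : (#{p ∈ Icc 1 N ×ˢ Icc 1 N | p.1.Coprime p.2} : ℝ)
      + #{p ∈ Icc 1 N ×ˢ Icc 1 N | ¬ p.1.Coprime p.2} = (N : ℝ) ^ 2 := by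
    exact_mod_cast hsplit.trans (sq N).symm
  linarith

def pairVec (u v : ℤ) : Fin 4 → ℤ := ![u, v, -u, -v]

lemma pairVec_injective : Function.Injective fun p : ℤ × ℤ => pairVec p.1 p.2 := by
  intro p q h
  exact Prod.ext (congrFun h 0) (congrFun h 1)

lemma gcd_natAbs_pairVec (u v : ℤ) :
    (univ.gcd fun i => (pairVec u v i).natAbs) = Nat.gcd u.natAbs v.natAbs := by
  simp [Fin.univ_succ, pairVec]
  exact (Nat.gcd_assoc _ _ _).symm.trans (Nat.gcd_self _)

lemma abs_pairVec_le (u v : ℤ) (i : Fin 4) : |pairVec u v i| ≤ max |u| |v| := by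
  fin_cases i <;> simp [pairVec]

lemma pairVec_mul_eq (u v : ℤ) :
    pairVec u v 0 * pairVec u v 1 = pairVec u v 2 * pairVec u v 3 := by
  simp [pairVec]

lemma exists_isotropic_pairVec (R : Type*) [CommRing R] [Nontrivial R] (u v : ℤ) :
    ∃ x : Fin 4 → R, x ≠ 0 ∧ ∑ i, (pairVec u v i : R) * x i ^ 2 = 0 :=
  ⟨1, one_ne_zero, by simp [Fin.sum_univ_four, pairVec]⟩

lemma finite_setOf_abs_le (n : ℕ) (r : ℝ) :
    {y : Fin n → ℤ | ∀ i, ((|y i| : ℤ) : ℝ) ≤ r}.Finite := by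
  refine (Set.Finite.pi' fun _ => Set.finite_Icc (-⌊r⌋) ⌊r⌋).subset fun y hy i => ?_
  exact abs_le.mp (Int.le_floor.mpr (hy i))

/-- Lower bound: at least `cB` primitive integer vectors `y` of height `≤ √B` on the
split quadric `y0y1 = y2y3` whose fibre quadric is everywhere locally soluble
(each projective point is counted twice, once for each sign). -/
theorem stmt_14 : ∃ c : ℝ, 0 < c ∧ ∀ B : ℝ, 1 ≤ B →
    c * B ≤
      (Set.ncard {y : Fin 4 → ℤ |
          (Finset.univ.gcd fun i => (y i).natAbs) = 1 ∧
          (∀ i, ((|y i| : ℤ) : ℝ) ≤ Real.sqrt B) ∧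
          y 0 * y 1 = y 2 * y 3 ∧
          (∃ x : Fin 4 → ℝ, x ≠ 0 ∧ ∑ i, ((y i : ℤ) : ℝ) * (x i) ^ 2 = 0) ∧
          (∀ (p : ℕ) [Fact p.Prime], ∃ x : Fin 4 → ℚ_[p], x ≠ 0 ∧
            ∑ i, ((y i : ℤ) : ℚ_[p]) * (x i) ^ 2 = 0)} : ℝ) := by
  refine ⟨1 / 48, by norm_num, fun B hB => ?_⟩
  set N := ⌊Real.sqrt B⌋₊
  have hN : Real.sqrt B / 2 < N := Nat.div_two_lt_floor (Real.one_le_sqrt.mpr hB)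
  have hNle : (N : ℝ) ≤ Real.sqrt B := Nat.floor_le (Real.sqrt_nonneg B)
  set S := {p ∈ Icc 1 N ×ˢ Icc 1 N | p.1.Coprime p.2}
  let f : ℕ × ℕ → Fin 4 → ℤ := fun p => pairVec p.1 p.2
  have hf : Function.Injective f := pairVec_injective.comp
    (Prod.map_injective.mpr ⟨Nat.cast_injective, Nat.cast_injective⟩)
  calc 1 / 48 * B = (Real.sqrt B / 2) ^ 2 / 12 := by
        rw [div_pow, Real.sq_sqrt (by linarith)]; ring
    _ ≤ (N : ℝ) ^ 2 / 12 := by gcongr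
    _ ≤ #S := card_coprime_Icc_ge N
    _ = (f '' S).ncard := by rw [Set.ncard_image_of_injective _ hf, Set.ncard_coe_finset]
    _ ≤ _ := by
      gcongr
      · exact (finite_setOf_abs_le 4 _).subset fun y hy => hy.2.1
      rintro _ ⟨⟨u, v⟩, hp, rfl⟩
      simp only [S, coe_filter, mem_product, mem_Icc, Set.mem_ofPred_eq] at hp
      obtain ⟨⟨⟨-, huN⟩, -, hvN⟩, huv⟩ := hp
      refine ⟨by simpa [f, gcd_natAbs_pairVec] using huv, fun i => ?_, pairVec_mul_eq _ _,
        exists_isotropic_pairVec ℝ _ _, fun p _ => exists_isotropic_pairVec ℚ_[p] _ _⟩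
      refine le_trans ?_ hNle
      exact_mod_cast (abs_pairVec_le u v i).trans (by simp [huN, hvN])
end

section
/- For real parameters T0, T1, T2, T3 ≥ 1 ranging over powers of 2 subject to T0*T2, T0*T3, T1*T2, T1*T3 ≤ 4√B, one has ∑ T0*T1*T2*T3 / (1 + log min{T0,T1,T2,T3})^2 ≪ B, where the implied constant is absolute. -/
/-!
Write `X = 4√B` and `w j = 1/(1 + j log 2)²`, and bound `w (min j)` by the sum of the four
terms `[j₀ ≤ j₁] w j₀`, `[j₁ ≤ j₀] w j₁`, `[j₂ ≤ j₃] w j₂`, `[j₃ ≤ j₂] w j₃`. The constraints are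
invariant under `j₀ ↔ j₁`, `j₂ ↔ j₃` and `(j₀, j₁) ↔ (j₂, j₃)`, so the four resulting sums are
equal and it suffices to treat `j₀ ≤ j₁`. Keeping only `2^(j₁+j₂), 2^(j₁+j₃) ≤ X`, the geometric
sums over `j₂` and `j₃` are each at most `2X / 2^j₁`, the sum over `j₁ ≥ j₀` of `2^j₀ / 2^j₁` is
at most `2`, and `∑ w` converges. The total is `O(X²) = O(B)`.
-/

open Finset

lemma sum_range_ite_two_pow_le (N : ℕ) {Y : ℝ} (hY : 0 ≤ Y) :
    ∑ d ∈ range N, (if (2 : ℝ) ^ d ≤ Y then (2 : ℝ) ^ d else 0) ≤ 2 * Y := by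
  rw [← sum_filter]
  set s := (range N).filter fun d => (2 : ℝ) ^ d ≤ Y
  obtain hs | hs := s.eq_empty_or_nonempty
  · simpa [hs] using hY
  have hmax : (2 : ℝ) ^ s.max' hs ≤ Y := (mem_filter.mp (s.max'_mem hs)).2
  have hlt : ∑ d ∈ s, 2 ^ d < 2 ^ (s.max' hs + 1) :=
    Nat.geomSum_lt le_rfl fun d hd => Nat.lt_succ_of_le (s.le_max' d hd)
  calc ∑ d ∈ s, (2 : ℝ) ^ d = ((∑ d ∈ s, 2 ^ d : ℕ) : ℝ) := by push_cast; rfl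
    _ ≤ ((2 ^ (s.max' hs + 1) : ℕ) : ℝ) := by exact_mod_cast hlt.le
    _ = 2 * 2 ^ s.max' hs := by push_cast; ring
    _ ≤ 2 * Y := by gcongr

lemma sum_range_ite_two_pow_div_le (N a : ℕ) :
    ∑ b ∈ range N, (if a ≤ b then (2 : ℝ) ^ a / 2 ^ b else 0) ≤ 2 := by
  have hIco : (range N).filter (a ≤ ·) = Ico a N := by ext; simp [and_comm]
  rw [← sum_filter, hIco, sum_Ico_eq_sum_range]
  calc ∑ i ∈ range (N - a), (2 : ℝ) ^ a / 2 ^ (a + i)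
      = ∑ i ∈ range (N - a), (1 / 2 : ℝ) ^ i := by
        refine sum_congr rfl fun i _ => ?_
        rw [pow_add, one_div_pow]; field_simp
    _ ≤ 2 := sum_geometric_two_le _

lemma apply_min_le_ite_add_ite {f : ℕ → ℝ} (hf : ∀ n, 0 ≤ f n) (a b : ℕ) :
    f (min a b) ≤ (if a ≤ b then f a else 0) + (if b ≤ a then f b else 0) := by
  rcases le_total a b with h | h
  · rw [min_eq_left h, if_pos h]
    split_ifs <;> linarith [hf b]
  · rw [min_eq_right h, if_pos h]
    split_ifs <;> linarith [hf a]

lemma apply_min_min_le {f : ℕ → ℝ} (hf : ∀ n, 0 ≤ f n) (a b c d : ℕ) :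
    f (min (min a b) (min c d))
      ≤ (if a ≤ b then f a else 0) + (if b ≤ a then f b else 0) +
        ((if c ≤ d then f c else 0) + (if d ≤ c then f d else 0)) := by
  have hsplit : f (min (min a b) (min c d)) ≤ f (min a b) + f (min c d) := by
    rcases min_choice (min a b) (min c d) with h | h <;> rw [h] <;>
      linarith [hf (min a b), hf (min c d)]
  linarith [apply_min_le_ite_add_ite hf a b, apply_min_le_ite_add_ite hf c d]

lemma sum_four_symmetrize (s : Finset ℕ) (f : ℕ → ℕ → ℕ → ℕ → ℝ) :
    ∑ a ∈ s, ∑ b ∈ s, ∑ c ∈ s, ∑ d ∈ s,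
        (f a b c d + f b a c d + f c d a b + f d c a b)
      = 4 * ∑ a ∈ s, ∑ b ∈ s, ∑ c ∈ s, ∑ d ∈ s, f a b c d := by
  have swap_pairs : ∀ g : ℕ → ℕ → ℕ → ℕ → ℝ,
      ∑ a ∈ s, ∑ b ∈ s, ∑ c ∈ s, ∑ d ∈ s, g c d a b
        = ∑ a ∈ s, ∑ b ∈ s, ∑ c ∈ s, ∑ d ∈ s, g a b c d := fun g => by
    simpa only [sum_product] using
      sum_comm (s := s ×ˢ s) (t := s ×ˢ s) (f := fun p q => g q.1 q.2 p.1 p.2)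
  have swap_first : ∑ a ∈ s, ∑ b ∈ s, ∑ c ∈ s, ∑ d ∈ s, f b a c d
      = ∑ a ∈ s, ∑ b ∈ s, ∑ c ∈ s, ∑ d ∈ s, f a b c d := sum_comm
  have swap_last : ∑ a ∈ s, ∑ b ∈ s, ∑ c ∈ s, ∑ d ∈ s, f d c a b
      = ∑ a ∈ s, ∑ b ∈ s, ∑ c ∈ s, ∑ d ∈ s, f a b c d :=
    (swap_pairs fun a b c d => f b a c d).trans swap_first
  simp only [sum_add_distrib, swap_first, swap_pairs f, swap_last]
  ring

section PairMinTerm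

variable (w : ℕ → ℝ) (X : ℝ)

noncomputable def cappedPow (b c : ℕ) : ℝ := if (2 : ℝ) ^ (b + c) ≤ X then 2 ^ c else 0

/-- Dominates the summand on the quadruples where `a ≤ b` carries the minimum, keeping only the
two constraints through the larger index `b`. -/
noncomputable def pairMinTerm (a b c d : ℕ) : ℝ :=
  (if a ≤ b then w a else 0) * 2 ^ (a + b) * cappedPow X b c * cappedPow X b d

variable {X}

lemma cappedPow_nonneg (b c : ℕ) : 0 ≤ cappedPow X b c := by
  unfold cappedPow; split_ifs <;> positivity

lemma sum_range_cappedPow_le (hX : 0 ≤ X) (N b : ℕ) :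
    ∑ c ∈ range N, cappedPow X b c ≤ 2 * (X / 2 ^ b) := by
  have hcap : ∀ c, ((2 : ℝ) ^ (b + c) ≤ X) ↔ (2 : ℝ) ^ c ≤ X / 2 ^ b := fun c => by
    rw [le_div_iff₀ (by positivity), pow_add, mul_comm]
  simp only [cappedPow, hcap]
  exact sum_range_ite_two_pow_le N (by positivity)

variable {w}

lemma sum_pairMinTerm_le (hw : ∀ n, 0 ≤ w n) (hX : 0 ≤ X) (N : ℕ) :
    ∑ a ∈ range N, ∑ b ∈ range N, ∑ c ∈ range N, ∑ d ∈ range N,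
        pairMinTerm w X a b c d
      ≤ 8 * X ^ 2 * ∑ a ∈ range N, w a := by
  have inner : ∀ a b, ∑ c ∈ range N, ∑ d ∈ range N, pairMinTerm w X a b c d
      ≤ 4 * X ^ 2 * w a * (if a ≤ b then (2 : ℝ) ^ a / 2 ^ b else 0) := fun a b => by
    calc ∑ c ∈ range N, ∑ d ∈ range N, pairMinTerm w X a b c d
        = (if a ≤ b then w a else 0) * 2 ^ (a + b) *
            ((∑ c ∈ range N, cappedPow X b c) * ∑ d ∈ range N, cappedPow X b d) := by
          rw [sum_mul_sum, mul_sum]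
          exact sum_congr rfl fun c _ => by
            rw [mul_sum]; exact sum_congr rfl fun d _ => by unfold pairMinTerm; ring
      _ ≤ (if a ≤ b then w a else 0) * 2 ^ (a + b) *
            ((2 * (X / 2 ^ b)) * (2 * (X / 2 ^ b))) := by
          have hite : 0 ≤ if a ≤ b then w a else 0 := ite_nonneg (hw a) le_rfl
          gcongr
          · exact sum_nonneg fun c _ => cappedPow_nonneg b c
          all_goals exact sum_range_cappedPow_le hX N b
      _ = 4 * X ^ 2 * w a * (if a ≤ b then (2 : ℝ) ^ a / 2 ^ b else 0) := by
          split_ifs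
          · field_simp; ring
          · ring
  calc _ ≤ ∑ a ∈ range N, ∑ b ∈ range N,
          4 * X ^ 2 * w a * (if a ≤ b then (2 : ℝ) ^ a / 2 ^ b else 0) := by
        gcongr with a _ b _; exact inner a b
    _ = ∑ a ∈ range N, 4 * X ^ 2 * w a *
          ∑ b ∈ range N, (if a ≤ b then (2 : ℝ) ^ a / 2 ^ b else 0) := by
        simp only [mul_sum]
    _ ≤ ∑ a ∈ range N, 4 * X ^ 2 * w a * 2 := by
        gcongr with a _
        · have := hw a; positivity
        · exact sum_range_ite_two_pow_div_le N a
    _ = 8 * X ^ 2 * ∑ a ∈ range N, w a := by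
        rw [mul_sum]; exact sum_congr rfl fun a _ => by ring

lemma ite_le_sum_pairMinTerm (hw : ∀ n, 0 ≤ w n) (j0 j1 j2 j3 : ℕ) :
    (if (2 : ℝ) ^ (j0 + j2) ≤ X ∧ (2 : ℝ) ^ (j0 + j3) ≤ X ∧
        (2 : ℝ) ^ (j1 + j2) ≤ X ∧ (2 : ℝ) ^ (j1 + j3) ≤ X then
      (2 : ℝ) ^ (j0 + j1 + j2 + j3) * w (min (min j0 j1) (min j2 j3))
    else 0)
      ≤ pairMinTerm w X j0 j1 j2 j3 + pairMinTerm w X j1 j0 j2 j3 +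
        pairMinTerm w X j2 j3 j0 j1 + pairMinTerm w X j3 j2 j0 j1 := by
  have hterm : ∀ a b c d, 0 ≤ pairMinTerm w X a b c d := fun a b c d =>
    mul_nonneg (mul_nonneg (mul_nonneg (ite_nonneg (hw a) le_rfl) (by positivity))
      (cappedPow_nonneg b c)) (cappedPow_nonneg b d)
  split_ifs with h
  case neg =>
    linarith [hterm j0 j1 j2 j3, hterm j1 j0 j2 j3, hterm j2 j3 j0 j1, hterm j3 j2 j0 j1]
  obtain ⟨h02, h03, h12, h13⟩ := h
  have h20 : (2 : ℝ) ^ (j2 + j0) ≤ X := by rwa [add_comm]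
  have h30 : (2 : ℝ) ^ (j3 + j0) ≤ X := by rwa [add_comm]
  have h21 : (2 : ℝ) ^ (j2 + j1) ≤ X := by rwa [add_comm]
  have h31 : (2 : ℝ) ^ (j3 + j1) ≤ X := by rwa [add_comm]
  simp only [pairMinTerm, cappedPow, if_pos h02, if_pos h03, if_pos h12, if_pos h13,
    if_pos h20, if_pos h30, if_pos h21, if_pos h31]
  calc _ ≤ (2 : ℝ) ^ (j0 + j1 + j2 + j3) *
          ((if j0 ≤ j1 then w j0 else 0) + (if j1 ≤ j0 then w j1 else 0) +
            ((if j2 ≤ j3 then w j2 else 0) + (if j3 ≤ j2 then w j3 else 0))) := by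
        gcongr; exact apply_min_min_le hw j0 j1 j2 j3
    _ = _ := by ring

end PairMinTerm

noncomputable def logWeight (n : ℕ) : ℝ := ((1 + Real.log (2 ^ n)) ^ 2)⁻¹

lemma summable_logWeight : Summable logWeight := by
  -- `1 + n log 2 = log 2 · (n + (log 2)⁻¹)`
  have hshifted := (Real.summable_one_div_nat_add_rpow (Real.log 2)⁻¹ 2).mpr one_lt_two
  refine (hshifted.mul_left ((Real.log 2)⁻¹ ^ 2)).congr fun n => ?_
  have hpos : (0 : ℝ) ≤ n + (Real.log 2)⁻¹ := by positivity
  rw [logWeight, Real.log_pow, abs_of_nonneg hpos, Real.rpow_two]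
  field_simp
  ring

open scoped Classical in
/-- Summing `T0T1T2T3/(1 + log min Tᵢ)²` over powers of two `Tᵢ = 2^{jᵢ}` with
`T0T2, T0T3, T1T2, T1T3 ≤ 4√B` gives `O(B)`. -/
theorem stmt_16 : ∃ C : ℝ, ∀ B : ℝ, 1 ≤ B →
    (∑ j0 ∈ Finset.range (⌊Real.logb 2 (4 * Real.sqrt B)⌋₊ + 1),
     ∑ j1 ∈ Finset.range (⌊Real.logb 2 (4 * Real.sqrt B)⌋₊ + 1),
     ∑ j2 ∈ Finset.range (⌊Real.logb 2 (4 * Real.sqrt B)⌋₊ + 1),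
     ∑ j3 ∈ Finset.range (⌊Real.logb 2 (4 * Real.sqrt B)⌋₊ + 1),
      if (2 : ℝ) ^ (j0 + j2) ≤ 4 * Real.sqrt B ∧ (2 : ℝ) ^ (j0 + j3) ≤ 4 * Real.sqrt B ∧
          (2 : ℝ) ^ (j1 + j2) ≤ 4 * Real.sqrt B ∧ (2 : ℝ) ^ (j1 + j3) ≤ 4 * Real.sqrt B then
        (2 : ℝ) ^ (j0 + j1 + j2 + j3) /
          (1 + Real.log ((2 : ℝ) ^ (min (min j0 j1) (min j2 j3)))) ^ 2
      else 0) ≤ C * B := by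
  refine ⟨512 * ∑' n, logWeight n, fun B hB => ?_⟩
  have hw : ∀ n, 0 ≤ logWeight n := fun n => by unfold logWeight; positivity
  set X := 4 * Real.sqrt B
  have hX : 0 ≤ X := by positivity
  have hX2 : X ^ 2 = 16 * B := by
    rw [mul_pow, Real.sq_sqrt (by linarith)]; norm_num
  set N := ⌊Real.logb 2 X⌋₊ + 1
  simp only [div_eq_mul_inv]
  calc _ ≤ ∑ j0 ∈ range N, ∑ j1 ∈ range N, ∑ j2 ∈ range N, ∑ j3 ∈ range N,
          (pairMinTerm logWeight X j0 j1 j2 j3 + pairMinTerm logWeight X j1 j0 j2 j3 +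
            pairMinTerm logWeight X j2 j3 j0 j1 + pairMinTerm logWeight X j3 j2 j0 j1) := by
        gcongr with j0 _ j1 _ j2 _ j3 _
        exact ite_le_sum_pairMinTerm hw j0 j1 j2 j3
    _ = 4 * ∑ j0 ∈ range N, ∑ j1 ∈ range N, ∑ j2 ∈ range N, ∑ j3 ∈ range N,
          pairMinTerm logWeight X j0 j1 j2 j3 := sum_four_symmetrize _ _
    _ ≤ 4 * (8 * X ^ 2 * ∑ n ∈ range N, logWeight n) := by
        gcongr; exact sum_pairMinTerm_le hw hX N
    _ ≤ 4 * (8 * X ^ 2 * ∑' n, logWeight n) := by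
        gcongr; exact summable_logWeight.sum_le_tsum _ fun n _ => hw n
    _ = (512 * ∑' n, logWeight n) * B := by rw [hX2]; ring
end
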